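/- arXiv:1810.03353 — 4 statements merged into one kernel-verified Lean document; each statement's English description precedes it below -/
import Mathlib

section
/- Let m : 𝒳 → ℝ be any measurable function and t : {0,1} × 𝒳 → ℝ any measurable function with t(1,X) − t(0,X) ≠ 0 almost surely on {R=1}, such that the integrands below are integrable. Then E[ (−1)^{1−Z} · m(X) · t(Z,X) / ( λ(Z|X) · (t(1,X) − t(0,X)) ) | R = 1 ] = E[ m(X) | R = 1 ]. -/
/-!
Split the integrand according to `Z`: it is `a(X)` on `{Z = 1}` and `b(X)` on `{Z = 0}`, with
`a = m t(1,·) / (λ Δ)` and `b = -m t(0,·) / ((1 - λ) Δ)`, `Δ = t(1,·) - t(0,·)`. Conditioning on `X`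
replaces the indicators of `{Z = 1}` and `{Z = 0}` by `λ(1|X)` and `1 - λ(1|X)`, and
`a λ + b (1 - λ) = m (t(1,·) - t(0,·)) / Δ = m`.
-/

open MeasureTheory ProbabilityTheory

namespace MeasureTheory

variable {Ω : Type*} {m m₀ : MeasurableSpace Ω} {μ : Measure Ω}

section PullOut

variable {f g : Ω → ℝ}

lemma integrable_mul_condExp_of_stronglyMeasurable_left (hf : StronglyMeasurable[m] f)
    (hg : Integrable g μ) (hfg : Integrable (f * g) μ) : Integrable (f * μ[g | m]) μ :=
  integrable_condExp.congr (condExp_mul_of_stronglyMeasurable_left hf hfg hg)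

lemma integral_mul_condExp_of_stronglyMeasurable_left (hm : m ≤ m₀) [SigmaFinite (μ.trim hm)]
    (hf : StronglyMeasurable[m] f) (hg : Integrable g μ) (hfg : Integrable (f * g) μ) :
    ∫ ω, (f * μ[g | m]) ω ∂μ = ∫ ω, (f * g) ω ∂μ :=
  (integral_congr_ae (condExp_mul_of_stronglyMeasurable_left hf hfg hg).symm).trans
    (integral_condExp hm)

end PullOut

lemma integral_ite_eq_integral_propensity (hm : m ≤ m₀) [IsFiniteMeasure μ]
    {Z : Ω → Bool} (hZ : Measurable Z) {a b p : Ω → ℝ}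
    (ha : StronglyMeasurable[m] a) (hb : StronglyMeasurable[m] b)
    (hp : μ[fun ω => if Z ω then 1 else 0 | m] =ᵐ[μ] p)
    (hint : Integrable (fun ω => if Z ω then a ω else b ω) μ) :
    ∫ ω, (if Z ω then a ω else b ω) ∂μ = ∫ ω, (a ω * p ω + b ω * (1 - p ω)) ∂μ := by
  set I : Ω → ℝ := fun ω => if Z ω then 1 else 0
  have hI_meas : Measurable I :=
    Measurable.ite (hZ (measurableSet_singleton true)) measurable_const measurable_const
  have hI_bound : ∀ ω, ‖I ω‖ ≤ 1 ∧ ‖1 - I ω‖ ≤ 1 := fun ω => by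
    cases hz : Z ω <;> simp [I, hz]
  have hI_int : Integrable I μ :=
    (integrable_const 1).mono' hI_meas.aestronglyMeasurable (.of_forall fun ω => (hI_bound ω).1)
  have hJ_int : Integrable (1 - I) μ := (integrable_const 1).sub hI_int
  have haI : Integrable (a * I) μ :=
    (hint.bdd_mul hI_meas.aestronglyMeasurable (.of_forall fun ω => (hI_bound ω).1)).congr
      (.of_forall fun ω => by cases hz : Z ω <;> simp [I, hz])
  have hbJ : Integrable (b * (1 - I)) μ :=
    (hint.bdd_mul (measurable_const.sub hI_meas).aestronglyMeasurable
      (.of_forall fun ω => (hI_bound ω).2)).congr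
      (.of_forall fun ω => by cases hz : Z ω <;> simp [I, hz])
  have hq : μ[1 - I | m] =ᵐ[μ] 1 - p := by
    refine (condExp_sub (integrable_const 1) hI_int m).trans ?_
    rw [condExp_const hm]
    filter_upwards [hp] with ω hω
    simp [hω]
  have hap : a * μ[I | m] =ᵐ[μ] a * p := Filter.EventuallyEq.rfl.mul hp
  have hbq : b * μ[1 - I | m] =ᵐ[μ] b * (1 - p) := Filter.EventuallyEq.rfl.mul hq
  have hap_int : Integrable (a * p) μ :=
    (integrable_mul_condExp_of_stronglyMeasurable_left ha hI_int haI).congr hap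
  have hbq_int : Integrable (b * (1 - p)) μ :=
    (integrable_mul_condExp_of_stronglyMeasurable_left hb hJ_int hbJ).congr hbq
  calc ∫ ω, (if Z ω then a ω else b ω) ∂μ = ∫ ω, ((a * I) ω + (b * (1 - I)) ω) ∂μ :=
        integral_congr_ae (.of_forall fun ω => by cases hz : Z ω <;> simp [I, hz])
    _ = ∫ ω, (a * I) ω ∂μ + ∫ ω, (b * (1 - I)) ω ∂μ := integral_add haI hbJ
    _ = ∫ ω, (a * p) ω ∂μ + ∫ ω, (b * (1 - p)) ω ∂μ := by
        rw [← integral_congr_ae hap, ← integral_congr_ae hbq,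
          integral_mul_condExp_of_stronglyMeasurable_left hm ha hI_int haI,
          integral_mul_condExp_of_stronglyMeasurable_left hm hb hJ_int hbJ]
    _ = ∫ ω, (a ω * p ω + b ω * (1 - p ω)) ∂μ := (integral_add hap_int hbq_int).symm

end MeasureTheory

theorem stmt_1_general
    {Ω 𝒳 : Type*} [MeasurableSpace Ω] [MeasurableSpace 𝒳]
    (P : Measure Ω)
    (R Z : Ω → Bool) (X : Ω → 𝒳)
    (hZ : Measurable Z) (hX : Measurable X)
    -- λ(1|x) := P(Z=1 | X=x, R=1)
    (lam : 𝒳 → ℝ) (hlam_meas : Measurable lam)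
    (hlam_ver : (fun ω => lam (X ω)) =ᵐ[P[|{ω | R ω = true}]]
      (P[|{ω | R ω = true}])[(fun ω => if Z ω then (1:ℝ) else 0) |
        MeasurableSpace.comap X inferInstance])
    -- 0 < λ(1|X) < 1 a.s. on {R=1}
    (hlam_pos : ∀ᵐ ω ∂(P[|{ω | R ω = true}]), 0 < lam (X ω) ∧ lam (X ω) < 1)
    (m : 𝒳 → ℝ) (hm : Measurable m)
    (t : Bool → 𝒳 → ℝ) (ht : Measurable fun p : Bool × 𝒳 => t p.1 p.2)
    (ht_ne : ∀ᵐ ω ∂(P[|{ω | R ω = true}]), t true (X ω) - t false (X ω) ≠ 0)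
    (hint : Integrable (fun ω => (if Z ω then (1:ℝ) else -1) * m (X ω) * t (Z ω) (X ω) /
        ((if Z ω then lam (X ω) else 1 - lam (X ω)) * (t true (X ω) - t false (X ω))))
      (P[|{ω | R ω = true}])) :
    ∫ ω, (if Z ω then (1:ℝ) else -1) * m (X ω) * t (Z ω) (X ω) /
        ((if Z ω then lam (X ω) else 1 - lam (X ω)) * (t true (X ω) - t false (X ω)))
      ∂(P[|{ω | R ω = true}])
      = ∫ ω, m (X ω) ∂(P[|{ω | R ω = true}]) := by
  have ht₁ : Measurable (t true) := ht.comp (measurable_const.prodMk measurable_id)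
  have ht₀ : Measurable (t false) := ht.comp (measurable_const.prodMk measurable_id)
  set a : 𝒳 → ℝ := fun x => m x * t true x / (lam x * (t true x - t false x))
  set b : 𝒳 → ℝ := fun x => -(m x * t false x) / ((1 - lam x) * (t true x - t false x))
  have hstrong : ∀ {f : 𝒳 → ℝ}, Measurable f →
      StronglyMeasurable[MeasurableSpace.comap X inferInstance] fun ω => f (X ω) :=
    fun hf => (hf.comp (comap_measurable X)).stronglyMeasurable
  have hsplit : ∀ ω, (if Z ω then (1:ℝ) else -1) * m (X ω) * t (Z ω) (X ω) /
      ((if Z ω then lam (X ω) else 1 - lam (X ω)) * (t true (X ω) - t false (X ω)))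
      = if Z ω then a (X ω) else b (X ω) := fun ω => by
    cases Z ω <;> simp [a, b, neg_div]
  simp_rw [hsplit] at hint ⊢
  rw [integral_ite_eq_integral_propensity hX.comap_le hZ (hstrong (by fun_prop))
    (hstrong (by fun_prop)) hlam_ver.symm hint]
  refine integral_congr_ae ?_
  filter_upwards [hlam_pos, ht_ne] with ω ⟨hlam₀, hlam₁⟩ hΔ
  have : 1 - lam (X ω) ≠ 0 := sub_ne_zero.mpr hlam₁.ne'
  simp only [a, b]
  field_simp
  ring

/-- For any measurable `m : 𝒳 → ℝ` and measurable `t : {0,1} × 𝒳 → ℝ` with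
`t(1,X) - t(0,X) ≠ 0` a.s. on `{R = 1}`, provided the displayed integrands are integrable,
`E[ (−1)^{1−Z} · m(X) · t(Z,X) / ( λ(Z|X) · (t(1,X) − t(0,X)) ) | R = 1 ] = E[ m(X) | R = 1 ]`.
Here `lam x` is a version of `λ(1|x) = P(Z=1 | X=x, R=1)` and `λ(0|x) = 1 - lam x`. -/
theorem stmt_1
    {Ω 𝒳 : Type*} [MeasurableSpace Ω] [MeasurableSpace 𝒳] [StandardBorelSpace 𝒳]
    (P : Measure Ω) [IsProbabilityMeasure P]
    (R Z : Ω → Bool) (X : Ω → 𝒳)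
    (hR : Measurable R) (hZ : Measurable Z) (hX : Measurable X)
    -- q† := P(R=1) ∈ (0,1)
    (hq : 0 < P {ω | R ω = true} ∧ P {ω | R ω = true} < 1)
    -- λ(1|x) := P(Z=1 | X=x, R=1)
    (lam : 𝒳 → ℝ) (hlam_meas : Measurable lam)
    (hlam_ver : (fun ω => lam (X ω)) =ᵐ[P[|{ω | R ω = true}]]
      (P[|{ω | R ω = true}])[(fun ω => if Z ω then (1:ℝ) else 0) |
        MeasurableSpace.comap X inferInstance])
    -- 0 < λ(1|X) < 1 a.s. on {R=1}
    (hlam_pos : ∀ᵐ ω ∂(P[|{ω | R ω = true}]), 0 < lam (X ω) ∧ lam (X ω) < 1)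
    (m : 𝒳 → ℝ) (hm : Measurable m)
    (t : Bool → 𝒳 → ℝ) (ht : Measurable fun p : Bool × 𝒳 => t p.1 p.2)
    (ht_ne : ∀ᵐ ω ∂(P[|{ω | R ω = true}]), t true (X ω) - t false (X ω) ≠ 0)
    (hint : Integrable (fun ω => (if Z ω then (1:ℝ) else -1) * m (X ω) * t (Z ω) (X ω) /
        ((if Z ω then lam (X ω) else 1 - lam (X ω)) * (t true (X ω) - t false (X ω))))
      (P[|{ω | R ω = true}]))
    (hint_m : Integrable (fun ω => m (X ω)) (P[|{ω | R ω = true}])) :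
    ∫ ω, (if Z ω then (1:ℝ) else -1) * m (X ω) * t (Z ω) (X ω) /
        ((if Z ω then lam (X ω) else 1 - lam (X ω)) * (t true (X ω) - t false (X ω)))
      ∂(P[|{ω | R ω = true}])
      = ∫ ω, m (X ω) ∂(P[|{ω | R ω = true}]) :=
  stmt_1_general P R Z X hZ hX lam hlam_meas hlam_ver hlam_pos m hm t ht ht_ne hint
end

section
/- (Mean-zero property of the efficient influence function of Theorem 2, evaluated at the truth.) Suppose E(Y | Z, X, R=1) = 𝓗(X)·τ(Z,X) + ω(X) a.s. for measurable functions 𝓗, ω, that P(D=1 | Z,X,R=0) = τ(Z,X) a.s. (propensity score equality), and set Δ := E[𝓗(X) | R=1]. Then E[ μ_eff(O; Δ) ] = 0, where μ_eff(O; Δ) := (−1)^{1−Z} · { (R/q†)·[Y − 𝓗(X)·τ(Z,X) − ω(X)] − ((1−R)/q†)·(π(Z,X)/(1−π(Z,X)))·𝓗(X)·[D − τ(Z,X)] } / ( λ(Z|X)·[τ(1,X) − τ(0,X)] ) + (R/q†)·(𝓗(X) − Δ). -/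
/-!
On `{R = 1}` the integrand is `armWeight(Z, X) / q† · (Y − 𝓗(X) τ(Z, X) − ω(X)) + (𝓗(X) − Δ) / q†`,
on `{R = 0}` it is a `(Z, X)`-measurable weight times `D − τ(Z, X)`. A `(Z, X)`-measurable multiple
of a residual whose conditional mean given `(Z, X)` vanishes has mean zero, so the outcome model
kills the first residual under `P[·|R = 1]` and propensity score equality kills the second under
`P[·|R = 0]`; the term `𝓗(X) − Δ` is centred under `P[·|R = 1]` by the choice of `Δ`.
-/

open MeasureTheory ProbabilityTheory

section GeneralFacts

variable {α : Type*} {m m₀ : MeasurableSpace α} {μ : Measure α}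

theorem integral_mul_sub_eq_zero_of_condExp_ae_eq (hm : m ≤ m₀) [SigmaFinite (μ.trim hm)]
    {f g h : α → ℝ} (hf : StronglyMeasurable[m] f) (hg : Integrable g μ)
    (hgh : μ[g|m] =ᵐ[μ] h) (hfgh : Integrable (fun x => f x * (g x - h x)) μ) :
    ∫ x, f x * (g x - h x) ∂μ = 0 := by
  have h_ae : (fun x => f x * (g x - h x)) =ᵐ[μ] f * (g - μ[g|m]) := by
    filter_upwards [hgh] with x hx
    simp [hx]
  have hint : Integrable (f * (g - μ[g|m])) μ := hfgh.congr h_ae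
  have hproj : μ[μ[g|m]|m] = μ[g|m] :=
    condExp_of_stronglyMeasurable hm stronglyMeasurable_condExp integrable_condExp
  have hcond : μ[f * (g - μ[g|m])|m] =ᵐ[μ] 0 := by
    filter_upwards [condExp_mul_of_stronglyMeasurable_left hf hint (hg.sub integrable_condExp),
      condExp_sub hg (integrable_condExp (m := m) (f := g)) m] with x hmul hsub
    simp [hmul, hsub, hproj]
  rw [integral_congr_ae h_ae, ← integral_condExp hm, integral_congr_ae hcond]
  simp

theorem MeasureTheory.Integrable.cond {E : Type*} [NormedAddCommGroup E] {f : α → E}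
    (hf : Integrable f μ) (s : Set α) :
    Integrable f μ[|s] := by
  by_cases hs : μ s = 0
  · simp [cond_eq_zero_of_meas_eq_zero hs]
  · exact hf.restrict.smul_measure (ENNReal.inv_ne_top.mpr hs)

theorem setIntegral_eq_measureReal_mul_integral_cond [IsFiniteMeasure μ] (s : Set α)
    (f : α → ℝ) : ∫ x in s, f x ∂μ = μ.real s * ∫ x, f x ∂μ[|s] := by
  by_cases hs : μ s = 0
  · simp [cond_eq_zero_of_meas_eq_zero hs, Measure.restrict_eq_zero.mpr hs]
  · rw [ProbabilityTheory.cond, integral_smul_measure, ENNReal.toReal_inv, smul_eq_mul,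
      ← mul_assoc, measureReal_def,
      mul_inv_cancel₀ (ENNReal.toReal_ne_zero.mpr ⟨hs, measure_ne_top _ _⟩), one_mul]

theorem integral_eq_cond_true_add_cond_false [IsFiniteMeasure μ] {R : α → Bool}
    (hR : Measurable R) {f : α → ℝ} (hf : Integrable f μ) :
    ∫ x, f x ∂μ = μ.real {x | R x = true} * ∫ x, f x ∂μ[|{x | R x = true}] +
      μ.real {x | R x = false} * ∫ x, f x ∂μ[|{x | R x = false}] := by
  have hcompl : {x | R x = false} = {x | R x = true}ᶜ := by ext; simp
  rw [hcompl, ← setIntegral_eq_measureReal_mul_integral_cond,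
    ← setIntegral_eq_measureReal_mul_integral_cond]
  exact (integral_add_compl (hR (measurableSet_singleton true)) hf).symm

end GeneralFacts

section EfficientInfluence

variable {Ω 𝒳 : Type*}

/-- `(-1)^(1-z) / (λ(z|x) (τ(1,x) - τ(0,x)))`. -/
noncomputable def armWeight (lam : 𝒳 → ℝ) (tau : Bool → 𝒳 → ℝ) (z : Bool) (x : 𝒳) : ℝ :=
  (if z then 1 else -1) / ((if z then lam x else 1 - lam x) * (tau true x - tau false x))

/-- The efficient influence function `μ_eff(O; Δ)`, with `q` in place of `q† = P(R = 1)`. -/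
noncomputable def effInfluence (q : ℝ) (R Z D : Ω → Bool) (X : Ω → 𝒳) (Y : Ω → ℝ)
    (lam : 𝒳 → ℝ) (tau pi : Bool → 𝒳 → ℝ) (Hfun wfun : 𝒳 → ℝ) (Δ : ℝ) (ω : Ω) : ℝ :=
  (if Z ω then (1:ℝ) else -1) *
      ((if R ω then (1:ℝ) else 0) / q * (Y ω - Hfun (X ω) * tau (Z ω) (X ω) - wfun (X ω)) -
        (if R ω then (0:ℝ) else 1) / q *
          (pi (Z ω) (X ω) / (1 - pi (Z ω) (X ω))) * Hfun (X ω) *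
          ((if D ω then (1:ℝ) else 0) - tau (Z ω) (X ω))) /
      ((if Z ω then lam (X ω) else 1 - lam (X ω)) * (tau true (X ω) - tau false (X ω))) +
    (if R ω then (1:ℝ) else 0) / q * (Hfun (X ω) - Δ)

variable {R Z D : Ω → Bool} {X : Ω → 𝒳} {Y : Ω → ℝ} {lam : 𝒳 → ℝ} {tau pi : Bool → 𝒳 → ℝ}
  {Hfun wfun : 𝒳 → ℝ} {q Δ : ℝ}

theorem effInfluence_of_R_true {ω : Ω} (hR : R ω = true) :
    effInfluence q R Z D X Y lam tau pi Hfun wfun Δ ω =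
      armWeight lam tau (Z ω) (X ω) / q * (Y ω - (Hfun (X ω) * tau (Z ω) (X ω) + wfun (X ω))) +
        (Hfun (X ω) - Δ) / q := by
  cases hZ : Z ω <;>
    simp only [effInfluence, armWeight, hR, hZ, if_true, if_false, Bool.false_eq_true] <;> ring

theorem effInfluence_of_R_false {ω : Ω} (hR : R ω = false) :
    effInfluence q R Z D X Y lam tau pi Hfun wfun Δ ω =
      -(armWeight lam tau (Z ω) (X ω) / q * (pi (Z ω) (X ω) / (1 - pi (Z ω) (X ω))) *
          Hfun (X ω)) * ((if D ω then (1:ℝ) else 0) - tau (Z ω) (X ω)) := by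
  cases hZ : Z ω <;>
    simp only [effInfluence, armWeight, hR, hZ, if_true, if_false, Bool.false_eq_true] <;> ring

variable [MeasurableSpace Ω] [MeasurableSpace 𝒳]

theorem measurable_armWeight (hlam : Measurable lam)
    (htau : Measurable fun p : Bool × 𝒳 => tau p.1 p.2) :
    Measurable fun p : Bool × 𝒳 => armWeight lam tau p.1 p.2 := by
  have hfst : MeasurableSet {p : Bool × 𝒳 | p.1 = true} :=
    measurable_fst (measurableSet_singleton true)
  have htau_at (b : Bool) : Measurable fun p : Bool × 𝒳 => tau b p.2 :=
    htau.comp (measurable_const.prodMk measurable_snd)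
  exact (Measurable.ite hfst measurable_const measurable_const).div
    ((Measurable.ite hfst (hlam.comp measurable_snd)
      (measurable_const.sub (hlam.comp measurable_snd))).mul
      ((htau_at true).sub (htau_at false)))

variable {P : Measure Ω}

theorem integral_effInfluence_cond_R_true_eq_zero [IsFiniteMeasure P] (hR : Measurable R)
    (hZ : Measurable Z) (hX : Measurable X) (hY : Integrable Y P)
    (hP : P {ω | R ω = true} ≠ 0) (hlam : Measurable lam)
    (htau : Measurable fun p : Bool × 𝒳 => tau p.1 p.2)
    (hout : (P[|{ω | R ω = true}])[Y | MeasurableSpace.comap (fun ω => (Z ω, X ω)) inferInstance]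
      =ᵐ[P[|{ω | R ω = true}]] fun ω => Hfun (X ω) * tau (Z ω) (X ω) + wfun (X ω))
    (hH : Integrable (fun ω => Hfun (X ω)) (P[|{ω | R ω = true}]))
    (hint : Integrable (effInfluence q R Z D X Y lam tau pi Hfun wfun
      (∫ ω, Hfun (X ω) ∂(P[|{ω | R ω = true}]))) P) :
    ∫ ω, effInfluence q R Z D X Y lam tau pi Hfun wfun (∫ ω, Hfun (X ω) ∂(P[|{ω | R ω = true}])) ω
      ∂(P[|{ω | R ω = true}]) = 0 := by
  set s := {ω | R ω = true}
  set Δ := ∫ ω, Hfun (X ω) ∂(P[|s])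
  have : IsProbabilityMeasure (P[|s]) := cond_isProbabilityMeasure hP
  have hΦ : effInfluence q R Z D X Y lam tau pi Hfun wfun Δ =ᵐ[P[|s]] fun ω =>
      armWeight lam tau (Z ω) (X ω) / q * (Y ω - (Hfun (X ω) * tau (Z ω) (X ω) + wfun (X ω))) +
        (Hfun (X ω) - Δ) / q := by
    filter_upwards [ae_cond_mem (hR (measurableSet_singleton true))] with ω hω
    exact effInfluence_of_R_true hω
  have hcentered : Integrable (fun ω => (Hfun (X ω) - Δ) / q) (P[|s]) :=
    (hH.sub (integrable_const Δ)).div_const q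
  have hresidual : Integrable (fun ω => armWeight lam tau (Z ω) (X ω) / q *
      (Y ω - (Hfun (X ω) * tau (Z ω) (X ω) + wfun (X ω)))) (P[|s]) := by
    refine (((hint.cond s).congr hΦ).sub hcentered).congr ?_
    filter_upwards with ω
    simp
  have hmean : ∫ ω, (Hfun (X ω) - Δ) / q ∂(P[|s]) = 0 := by
    rw [integral_div, integral_sub hH (integrable_const Δ), integral_const]
    simp [Δ]
  rw [integral_congr_ae hΦ, integral_add hresidual hcentered, hmean, add_zero]
  exact integral_mul_sub_eq_zero_of_condExp_ae_eq (hZ.prodMk hX).comap_le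
    (((measurable_armWeight hlam htau).div_const q).comp (comap_measurable _)).stronglyMeasurable
    (hY.cond s) hout hresidual

theorem integral_effInfluence_cond_R_false_eq_zero (hR : Measurable R) (hZ : Measurable Z)
    (hD : Measurable D) (hX : Measurable X) (hlam : Measurable lam)
    (htau : Measurable fun p : Bool × 𝒳 => tau p.1 p.2)
    (hpi : Measurable fun p : Bool × 𝒳 => pi p.1 p.2) (hHfun : Measurable Hfun)
    (hpse : (fun ω => tau (Z ω) (X ω)) =ᵐ[P[|{ω | R ω = false}]]
      (P[|{ω | R ω = false}])[(fun ω => if D ω then (1:ℝ) else 0) |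
        MeasurableSpace.comap (fun ω => (Z ω, X ω)) inferInstance])
    (hint : Integrable (effInfluence q R Z D X Y lam tau pi Hfun wfun Δ) P) :
    ∫ ω, effInfluence q R Z D X Y lam tau pi Hfun wfun Δ ω ∂(P[|{ω | R ω = false}]) = 0 := by
  set s := {ω | R ω = false}
  have hΦ : effInfluence q R Z D X Y lam tau pi Hfun wfun Δ =ᵐ[P[|s]] fun ω =>
      -(armWeight lam tau (Z ω) (X ω) / q * (pi (Z ω) (X ω) / (1 - pi (Z ω) (X ω))) *
          Hfun (X ω)) * ((if D ω then (1:ℝ) else 0) - tau (Z ω) (X ω)) := by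
    filter_upwards [ae_cond_mem (hR (measurableSet_singleton false))] with ω hω
    exact effInfluence_of_R_false hω
  have hweight : Measurable fun p : Bool × 𝒳 =>
      -(armWeight lam tau p.1 p.2 / q * (pi p.1 p.2 / (1 - pi p.1 p.2)) * Hfun p.2) := by
    have := measurable_armWeight hlam htau
    fun_prop
  have hDint : Integrable (fun ω => if D ω then (1:ℝ) else 0) (P[|s]) :=
    (integrable_const (1:ℝ)).mono'
      (Measurable.ite (hD (measurableSet_singleton true)) measurable_const
        measurable_const).aestronglyMeasurable
      (.of_forall fun ω => by split_ifs <;> simp)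
  rw [integral_congr_ae hΦ]
  exact integral_mul_sub_eq_zero_of_condExp_ae_eq (hZ.prodMk hX).comap_le
    (hweight.comp (comap_measurable _)).stronglyMeasurable hDint hpse.symm
    ((hint.cond s).congr hΦ)

end EfficientInfluence

theorem stmt_7_general
    {Ω 𝒳 : Type*} [MeasurableSpace Ω] [MeasurableSpace 𝒳]
    (P : Measure Ω) [IsProbabilityMeasure P]
    (R Z D : Ω → Bool) (X : Ω → 𝒳) (Y : Ω → ℝ)
    (hR : Measurable R) (hZ : Measurable Z) (hD : Measurable D)
    (hX : Measurable X) (hYint : Integrable Y P)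
    -- q† := P(R=1) ∈ (0,1)
    (hq : 0 < P {ω | R ω = true} ∧ P {ω | R ω = true} < 1)
    -- λ(1|x) := P(Z=1 | X=x, R=1), with 0 < λ(1|X) < 1 a.s. on {R=1}
    (lam : 𝒳 → ℝ) (hlam_meas : Measurable lam)
    -- τ(z,x) := P(D=1 | Z=z, X=x, R=1), with τ(1,X) − τ(0,X) ≠ 0 a.s. on {R=1}
    (tau : Bool → 𝒳 → ℝ) (htau_meas : Measurable fun p : Bool × 𝒳 => tau p.1 p.2)
    -- π(z,x) := P(R=1 | Z=z, X=x), with 0 < π(Z,X) < 1 a.s.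
    (pi : Bool → 𝒳 → ℝ) (hpi_meas : Measurable fun p : Bool × 𝒳 => pi p.1 p.2)
    -- outcome decomposition: E(Y | Z, X, R=1) = 𝓗(X)·τ(Z,X) + ω(X) a.s.
    (Hfun wfun : 𝒳 → ℝ) (hHfun_meas : Measurable Hfun)
    (hout : (P[|{ω | R ω = true}])[Y |
        MeasurableSpace.comap (fun ω => (Z ω, X ω)) inferInstance]
      =ᵐ[P[|{ω | R ω = true}]]
        fun ω => Hfun (X ω) * tau (Z ω) (X ω) + wfun (X ω))
    -- propensity score equality: P(D=1 | Z, X, R=0) = τ(Z,X) a.s.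
    (hpse : (fun ω => tau (Z ω) (X ω)) =ᵐ[P[|{ω | R ω = false}]]
      (P[|{ω | R ω = false}])[(fun ω => if D ω then (1:ℝ) else 0) |
        MeasurableSpace.comap (fun ω => (Z ω, X ω)) inferInstance])
    -- integrability of the displayed integrands
    (hHint : Integrable (fun ω => Hfun (X ω)) (P[|{ω | R ω = true}]))
    (hint : Integrable (fun ω =>
        (if Z ω then (1:ℝ) else -1) *
            ((if R ω then (1:ℝ) else 0) / (P {ω | R ω = true}).toReal *
                (Y ω - Hfun (X ω) * tau (Z ω) (X ω) - wfun (X ω)) -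
              (if R ω then (0:ℝ) else 1) / (P {ω | R ω = true}).toReal *
                (pi (Z ω) (X ω) / (1 - pi (Z ω) (X ω))) * Hfun (X ω) *
                ((if D ω then (1:ℝ) else 0) - tau (Z ω) (X ω))) /
            ((if Z ω then lam (X ω) else 1 - lam (X ω)) *
              (tau true (X ω) - tau false (X ω))) +
          (if R ω then (1:ℝ) else 0) / (P {ω | R ω = true}).toReal *
            (Hfun (X ω) - ∫ ω', Hfun (X ω') ∂(P[|{ω | R ω = true}]))) P) :
    -- conclusion: E[μ_eff(O; Δ)] = 0 with Δ := E[𝓗(X) | R=1]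
    ∫ ω,
        ((if Z ω then (1:ℝ) else -1) *
            ((if R ω then (1:ℝ) else 0) / (P {ω | R ω = true}).toReal *
                (Y ω - Hfun (X ω) * tau (Z ω) (X ω) - wfun (X ω)) -
              (if R ω then (0:ℝ) else 1) / (P {ω | R ω = true}).toReal *
                (pi (Z ω) (X ω) / (1 - pi (Z ω) (X ω))) * Hfun (X ω) *
                ((if D ω then (1:ℝ) else 0) - tau (Z ω) (X ω))) /
            ((if Z ω then lam (X ω) else 1 - lam (X ω)) *
              (tau true (X ω) - tau false (X ω))) +
          (if R ω then (1:ℝ) else 0) / (P {ω | R ω = true}).toReal *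
            (Hfun (X ω) - ∫ ω', Hfun (X ω') ∂(P[|{ω | R ω = true}]))) ∂P = 0 := by
  have hsplit := integral_eq_cond_true_add_cond_false (f := effInfluence
    (P {ω | R ω = true}).toReal R Z D X Y lam tau pi Hfun wfun
    (∫ ω', Hfun (X ω') ∂(P[|{ω | R ω = true}]))) hR hint
  rw [integral_effInfluence_cond_R_true_eq_zero hR hZ hX hYint hq.1.ne' hlam_meas htau_meas
      hout hHint hint,
    integral_effInfluence_cond_R_false_eq_zero hR hZ hD hX hlam_meas htau_meas hpi_meas
      hHfun_meas hpse hint, mul_zero, mul_zero, add_zero] at hsplit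
  exact hsplit

/-- Mean-zero property of the efficient influence function at the truth:
If `E(Y | Z, X, R=1) = 𝓗(X)·τ(Z,X) + ω(X)` a.s., `P(D=1 | Z,X,R=0) = τ(Z,X)` a.s.,
and `Δ := E[𝓗(X) | R=1]`, then `E[μ_eff(O; Δ)] = 0`. -/
theorem stmt_7
    {Ω 𝒳 : Type*} [MeasurableSpace Ω] [MeasurableSpace 𝒳] [StandardBorelSpace 𝒳]
    (P : Measure Ω) [IsProbabilityMeasure P]
    (R Z D : Ω → Bool) (X : Ω → 𝒳) (Y : Ω → ℝ)
    (hR : Measurable R) (hZ : Measurable Z) (hD : Measurable D)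
    (hX : Measurable X) (hY : Measurable Y) (hYint : Integrable Y P)
    -- q† := P(R=1) ∈ (0,1)
    (hq : 0 < P {ω | R ω = true} ∧ P {ω | R ω = true} < 1)
    -- λ(1|x) := P(Z=1 | X=x, R=1), with 0 < λ(1|X) < 1 a.s. on {R=1}
    (lam : 𝒳 → ℝ) (hlam_meas : Measurable lam)
    (hlam_ver : (fun ω => lam (X ω)) =ᵐ[P[|{ω | R ω = true}]]
      (P[|{ω | R ω = true}])[(fun ω => if Z ω then (1:ℝ) else 0) |
        MeasurableSpace.comap X inferInstance])
    (hlam_pos : ∀ᵐ ω ∂(P[|{ω | R ω = true}]), 0 < lam (X ω) ∧ lam (X ω) < 1)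
    -- τ(z,x) := P(D=1 | Z=z, X=x, R=1), with τ(1,X) − τ(0,X) ≠ 0 a.s. on {R=1}
    (tau : Bool → 𝒳 → ℝ) (htau_meas : Measurable fun p : Bool × 𝒳 => tau p.1 p.2)
    (htau_ver : (fun ω => tau (Z ω) (X ω)) =ᵐ[P[|{ω | R ω = true}]]
      (P[|{ω | R ω = true}])[(fun ω => if D ω then (1:ℝ) else 0) |
        MeasurableSpace.comap (fun ω => (Z ω, X ω)) inferInstance])
    (htau_ne : ∀ᵐ ω ∂(P[|{ω | R ω = true}]), tau true (X ω) - tau false (X ω) ≠ 0)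
    -- π(z,x) := P(R=1 | Z=z, X=x), with 0 < π(Z,X) < 1 a.s.
    (pi : Bool → 𝒳 → ℝ) (hpi_meas : Measurable fun p : Bool × 𝒳 => pi p.1 p.2)
    (hpi_ver : (fun ω => pi (Z ω) (X ω)) =ᵐ[P]
      P[(fun ω => if R ω then (1:ℝ) else 0) |
        MeasurableSpace.comap (fun ω => (Z ω, X ω)) inferInstance])
    (hpi_pos : ∀ᵐ ω ∂P, 0 < pi (Z ω) (X ω) ∧ pi (Z ω) (X ω) < 1)
    -- outcome decomposition: E(Y | Z, X, R=1) = 𝓗(X)·τ(Z,X) + ω(X) a.s.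
    (Hfun wfun : 𝒳 → ℝ) (hHfun_meas : Measurable Hfun) (hwfun_meas : Measurable wfun)
    (hout : (P[|{ω | R ω = true}])[Y |
        MeasurableSpace.comap (fun ω => (Z ω, X ω)) inferInstance]
      =ᵐ[P[|{ω | R ω = true}]]
        fun ω => Hfun (X ω) * tau (Z ω) (X ω) + wfun (X ω))
    -- propensity score equality: P(D=1 | Z, X, R=0) = τ(Z,X) a.s.
    (hpse : (fun ω => tau (Z ω) (X ω)) =ᵐ[P[|{ω | R ω = false}]]
      (P[|{ω | R ω = false}])[(fun ω => if D ω then (1:ℝ) else 0) |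
        MeasurableSpace.comap (fun ω => (Z ω, X ω)) inferInstance])
    -- integrability of the displayed integrands
    (hHint : Integrable (fun ω => Hfun (X ω)) (P[|{ω | R ω = true}]))
    (hint : Integrable (fun ω =>
        (if Z ω then (1:ℝ) else -1) *
            ((if R ω then (1:ℝ) else 0) / (P {ω | R ω = true}).toReal *
                (Y ω - Hfun (X ω) * tau (Z ω) (X ω) - wfun (X ω)) -
              (if R ω then (0:ℝ) else 1) / (P {ω | R ω = true}).toReal *
                (pi (Z ω) (X ω) / (1 - pi (Z ω) (X ω))) * Hfun (X ω) *
                ((if D ω then (1:ℝ) else 0) - tau (Z ω) (X ω))) /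
            ((if Z ω then lam (X ω) else 1 - lam (X ω)) *
              (tau true (X ω) - tau false (X ω))) +
          (if R ω then (1:ℝ) else 0) / (P {ω | R ω = true}).toReal *
            (Hfun (X ω) - ∫ ω', Hfun (X ω') ∂(P[|{ω | R ω = true}]))) P) :
    -- conclusion: E[μ_eff(O; Δ)] = 0 with Δ := E[𝓗(X) | R=1]
    ∫ ω,
        ((if Z ω then (1:ℝ) else -1) *
            ((if R ω then (1:ℝ) else 0) / (P {ω | R ω = true}).toReal *
                (Y ω - Hfun (X ω) * tau (Z ω) (X ω) - wfun (X ω)) -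
              (if R ω then (0:ℝ) else 1) / (P {ω | R ω = true}).toReal *
                (pi (Z ω) (X ω) / (1 - pi (Z ω) (X ω))) * Hfun (X ω) *
                ((if D ω then (1:ℝ) else 0) - tau (Z ω) (X ω))) /
            ((if Z ω then lam (X ω) else 1 - lam (X ω)) *
              (tau true (X ω) - tau false (X ω))) +
          (if R ω then (1:ℝ) else 0) / (P {ω | R ω = true}).toReal *
            (Hfun (X ω) - ∫ ω', Hfun (X ω') ∂(P[|{ω | R ω = true}]))) ∂P = 0 :=
  stmt_7_general P R Z D X Y hR hZ hD hX hYint hq lam hlam_meas tau htau_meas pi hpi_meas Hfun wfun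
    hHfun_meas hout hpse hHint hint
end

section
/- (Unbiasedness of the 𝓜₃ estimating function at the truth.) Suppose E(Y | Z, X, R=1) = 𝓗(X)·τ(Z,X) + ω(X) a.s. for measurable functions 𝓗, ω, and P(D=1 | Z,X,R=0) = τ(Z,X) a.s. (propensity score equality). Then for every measurable function G : 𝒳×{0,1} → ℝ^k such that the integrand is integrable, E[ G(X,Z) · { R·[Y − ω(X)] − ((1−R)·π(Z,X)/(1−π(Z,X)))·𝓗(X)·D } ] = 0. -/
/-!
Condition on `σ(Z, X)`. On the event `R = 1` the outcome model turns `Y - ω(X)` into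
`𝓗(X) τ(Z, X)`, and averaging out `R` against a `σ(Z, X)`-measurable weight produces the factor
`π(Z, X)`. On `R = 0` propensity score equality turns `D` into `τ(Z, X)`, and averaging out `R`
produces the factor `1 - π(Z, X)`, which cancels the odds `π / (1 - π)`. Both arms therefore
contribute `E[π 𝓗 τ G]`, and their difference vanishes.

The pull-out property needs bounded weights, so the identity is first proved on the
`σ(Z, X)`-measurable sets where all nuisance functions and `G` are bounded; these sets exhaust `Ω`,
and the integrability of the whole integrand passes to the limit.
-/

open MeasureTheory ProbabilityTheory Set

section CondExp

variable {Ω : Type*} {m m0 : MeasurableSpace Ω} {μ : Measure Ω}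
  {f g b : Ω → ℝ} {s A : Set Ω} {C : ℝ}

lemma setIntegral_cond (hA : MeasurableSet A) (u : Ω → ℝ) :
    ∫ ω in A, u ω ∂μ[|s] = (μ.real s)⁻¹ * ∫ ω in A ∩ s, u ω ∂μ := by
  rw [ProbabilityTheory.cond, Measure.restrict_smul, Measure.restrict_restrict hA,
    integral_smul_measure, ENNReal.toReal_inv, smul_eq_mul]
  rfl

variable [IsFiniteMeasure μ]

lemma setIntegral_mul_eq_of_condExp_ae_eq (hm : m ≤ m0) (hf : Integrable f μ)
    (hfg : μ[f|m] =ᵐ[μ] g) (hA : MeasurableSet[m] A) (hb : StronglyMeasurable[m] b)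
    (hbC : ∀ ω ∈ A, ‖b ω‖ ≤ C) :
    ∫ ω in A, f ω * b ω ∂μ = ∫ ω in A, g ω * b ω ∂μ := by
  have hbound : ∀ᵐ ω ∂μ, ‖A.indicator b ω‖ ≤ |C| := .of_forall fun ω => by
    by_cases hω : ω ∈ A
    · simpa [hω] using (hbC ω hω).trans (le_abs_self C)
    · simp [hω]
  have hpull := condExp_stronglyMeasurable_mul_of_bound hm (hb.indicator hA) hf |C| hbound
  have hind (u : Ω → ℝ) : ∫ ω in A, u ω * b ω ∂μ = ∫ ω, (A.indicator b * u) ω ∂μ := by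
    rw [← integral_indicator (hm _ hA)]
    congr 1 with ω
    by_cases hω : ω ∈ A <;> simp [hω, mul_comm]
  rw [hind, hind, ← integral_condExp hm]
  refine integral_congr_ae ?_
  filter_upwards [hpull, hfg] with ω h1 h2
  simp [h1, h2]

lemma setIntegral_inter_mul_eq_of_cond_condExp_ae_eq (hm : m ≤ m0)
    (hf : Integrable f μ) (hfg : μ[|s][f|m] =ᵐ[μ[|s]] g) (hA : MeasurableSet[m] A)
    (hb : StronglyMeasurable[m] b) (hbC : ∀ ω ∈ A, ‖b ω‖ ≤ C) :
    ∫ ω in A ∩ s, f ω * b ω ∂μ = ∫ ω in A ∩ s, g ω * b ω ∂μ := by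
  by_cases hμs : μ s = 0
  · have hnull : μ (A ∩ s) = 0 := measure_mono_null inter_subset_right hμs
    simp [Measure.restrict_eq_zero.mpr hnull]
  have hf_cond : Integrable f μ[|s] := hf.restrict.smul_measure (ENNReal.inv_ne_top.mpr hμs)
  have hcond := setIntegral_mul_eq_of_condExp_ae_eq hm hf_cond hfg hA hb hbC
  rw [setIntegral_cond (hm _ hA), setIntegral_cond (hm _ hA)] at hcond
  exact mul_left_cancel₀ (inv_ne_zero ((measureReal_ne_zero_iff).mpr hμs)) hcond

lemma setIntegral_inter_eq_setIntegral_mul_of_condExp_ae_eq (hm : m ≤ m0) (hs : MeasurableSet s)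
    {p : Ω → ℝ} (hp : μ[s.indicator 1|m] =ᵐ[μ] p) (hA : MeasurableSet[m] A)
    (hb : StronglyMeasurable[m] b) (hbC : ∀ ω ∈ A, ‖b ω‖ ≤ C) :
    ∫ ω in A ∩ s, b ω ∂μ = ∫ ω in A, p ω * b ω ∂μ := by
  rw [← setIntegral_indicator (μ := μ) hs, ← setIntegral_mul_eq_of_condExp_ae_eq hm
    ((integrable_const (μ := μ) 1).indicator hs) hp hA hb hbC]
  congr 1 with ω
  by_cases hω : ω ∈ s <;> simp [hω]

lemma condExp_indicator_compl_one_ae_eq (hm : m ≤ m0) (hs : MeasurableSet s) {p : Ω → ℝ}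
    (hp : μ[s.indicator 1|m] =ᵐ[μ] p) : μ[sᶜ.indicator 1|m] =ᵐ[μ] 1 - p := by
  rw [indicator_compl]
  have hone : μ[(1 : Ω → ℝ)|m] = 1 := condExp_const hm (1 : ℝ)
  have hsub := condExp_sub (m := m) (f := (1 : Ω → ℝ)) (g := s.indicator 1)
    (integrable_const (μ := μ) (1 : ℝ)) ((integrable_const (μ := μ) (1 : ℝ)).indicator hs)
  filter_upwards [hsub, hp] with ω h1 h2
  rw [h1, hone, Pi.sub_apply, h2]
  rfl

end CondExp

section Identification

variable {Ω : Type*} {m m0 : MeasurableSpace Ω} {P : Measure Ω} [IsFiniteMeasure P]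
  {s A : Set Ω} {Y W π H d τ g : Ω → ℝ} {C : ℝ}

lemma setIntegral_inter_sub_mul_eq (hm : m ≤ m0) (hs : MeasurableSet s) (hY : Integrable Y P)
    (hH : StronglyMeasurable[m] H) (hW : StronglyMeasurable[m] W)
    (hτ : StronglyMeasurable[m] τ) (hg : StronglyMeasurable[m] g)
    (hπ : P[s.indicator 1|m] =ᵐ[P] π)
    (hout : P[|s][Y|m] =ᵐ[P[|s]] fun ω => H ω * τ ω + W ω) (hA : MeasurableSet[m] A)
    (hHC : ∀ ω ∈ A, ‖H ω‖ ≤ C) (hWC : ∀ ω ∈ A, ‖W ω‖ ≤ C) (hτC : ∀ ω ∈ A, ‖τ ω‖ ≤ C)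
    (hgC : ∀ ω ∈ A, ‖g ω‖ ≤ C) :
    ∫ ω in A ∩ s, (Y ω - W ω) * g ω ∂P = ∫ ω in A, π ω * (H ω * τ ω * g ω) ∂P := by
  have hA0 : MeasurableSet A := hm _ hA
  have hC (ω) (hω : ω ∈ A) : ‖W ω * g ω‖ ≤ C * C ∧ ‖H ω * τ ω * g ω‖ ≤ C * C * C := by
    have := hHC ω hω; have := hWC ω hω; have := hτC ω hω; have := hgC ω hω
    have := (norm_nonneg _).trans (hgC ω hω)
    simp only [norm_mul]
    constructor <;> gcongr
  have hYg : IntegrableOn (fun ω => Y ω * g ω) (A ∩ s) P :=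
    hY.integrableOn.mul_bdd (hg.mono hm).aestronglyMeasurable.restrict
      (ae_restrict_of_forall_mem (hA0.inter hs) fun ω hω => hgC ω hω.1)
  have hWg : IntegrableOn (fun ω => W ω * g ω) (A ∩ s) P :=
    Measure.integrableOn_of_bounded (measure_ne_top P _)
      ((hW.mul hg).mono hm).aestronglyMeasurable
      (ae_restrict_of_forall_mem (hA0.inter hs) fun ω hω => (hC ω hω.1).1)
  have hHτg : IntegrableOn (fun ω => H ω * τ ω * g ω) (A ∩ s) P :=
    Measure.integrableOn_of_bounded (measure_ne_top P _)
      (((hH.mul hτ).mul hg).mono hm).aestronglyMeasurable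
      (ae_restrict_of_forall_mem (hA0.inter hs) fun ω hω => (hC ω hω.1).2)
  calc ∫ ω in A ∩ s, (Y ω - W ω) * g ω ∂P
      = ∫ ω in A ∩ s, Y ω * g ω ∂P - ∫ ω in A ∩ s, W ω * g ω ∂P := by
        simp only [sub_mul]; exact integral_sub hYg hWg
    _ = ∫ ω in A ∩ s, (H ω * τ ω * g ω + W ω * g ω) ∂P - ∫ ω in A ∩ s, W ω * g ω ∂P := by
        rw [setIntegral_inter_mul_eq_of_cond_condExp_ae_eq hm hY hout hA hg hgC]
        simp only [add_mul]
    _ = ∫ ω in A ∩ s, H ω * τ ω * g ω ∂P := by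
        rw [integral_add hHτg hWg, add_sub_cancel_right]
    _ = ∫ ω in A, π ω * (H ω * τ ω * g ω) ∂P :=
        setIntegral_inter_eq_setIntegral_mul_of_condExp_ae_eq hm hs hπ hA
          ((hH.mul hτ).mul hg) fun ω hω => (hC ω hω).2

lemma setIntegral_sdiff_odds_mul_eq (hm : m ≤ m0) (hs : MeasurableSet s) (hd : Integrable d P)
    (hπm : StronglyMeasurable[m] π) (hH : StronglyMeasurable[m] H)
    (hτ : StronglyMeasurable[m] τ) (hg : StronglyMeasurable[m] g)
    (hπ : P[s.indicator 1|m] =ᵐ[P] π) (hπ1 : ∀ᵐ ω ∂P, π ω ≠ 1)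
    (hpse : τ =ᵐ[P[|sᶜ]] P[|sᶜ][d|m]) (hA : MeasurableSet[m] A)
    (hρC : ∀ ω ∈ A, ‖π ω / (1 - π ω)‖ ≤ C) (hHC : ∀ ω ∈ A, ‖H ω‖ ≤ C)
    (hτC : ∀ ω ∈ A, ‖τ ω‖ ≤ C) (hgC : ∀ ω ∈ A, ‖g ω‖ ≤ C) :
    ∫ ω in A \ s, π ω / (1 - π ω) * H ω * d ω * g ω ∂P =
      ∫ ω in A, π ω * (H ω * τ ω * g ω) ∂P := by
  set ρ : Ω → ℝ := fun ω => π ω / (1 - π ω)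
  have hρHg : StronglyMeasurable[m] fun ω => ρ ω * H ω * g ω :=
    ((hπm.div (stronglyMeasurable_const.sub hπm)).mul hH).mul hg
  have hC (ω) (hω : ω ∈ A) :
      ‖ρ ω * H ω * g ω‖ ≤ C * C * C ∧ ‖τ ω * (ρ ω * H ω * g ω)‖ ≤ C * (C * C * C) := by
    have := hρC ω hω; have := hHC ω hω; have := hτC ω hω; have := hgC ω hω
    have := (norm_nonneg _).trans (hgC ω hω)
    simp only [norm_mul]
    constructor <;> gcongr
  calc ∫ ω in A \ s, ρ ω * H ω * d ω * g ω ∂P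
      = ∫ ω in A ∩ sᶜ, d ω * (ρ ω * H ω * g ω) ∂P := by
        rw [Set.sdiff_eq]; congr 1 with ω; ring
    _ = ∫ ω in A ∩ sᶜ, τ ω * (ρ ω * H ω * g ω) ∂P :=
        setIntegral_inter_mul_eq_of_cond_condExp_ae_eq hm hd hpse.symm hA hρHg
          fun ω hω => (hC ω hω).1
    _ = ∫ ω in A, (1 - π ω) * (τ ω * (ρ ω * H ω * g ω)) ∂P :=
        setIntegral_inter_eq_setIntegral_mul_of_condExp_ae_eq hm hs.compl
          (condExp_indicator_compl_one_ae_eq hm hs hπ) hA (hτ.mul hρHg) fun ω hω => (hC ω hω).2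
    _ = ∫ ω in A, π ω * (H ω * τ ω * g ω) ∂P := by
        refine setIntegral_congr_ae (hm _ hA) ?_
        filter_upwards [hπ1] with ω hω _
        have : 1 - π ω ≠ 0 := sub_ne_zero.mpr hω.symm
        simp only [ρ]
        field_simp

end Identification

lemma integral_eq_zero_of_setIntegral_sublevel_eq_zero {Ω : Type*} {m0 : MeasurableSpace Ω}
    {μ : Measure Ω} {f q : Ω → ℝ} (hq : Measurable q) (hf : Integrable f μ)
    (h : ∀ n : ℕ, ∫ ω in {ω | q ω ≤ n}, f ω ∂μ = 0) : ∫ ω, f ω ∂μ = 0 := by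
  have hmono : Monotone fun n : ℕ => {ω | q ω ≤ n} := fun i j hij ω (hω : q ω ≤ i) =>
    show q ω ≤ j from hω.trans (Nat.cast_le.mpr hij)
  have hunion : ⋃ n : ℕ, {ω | q ω ≤ n} = univ :=
    eq_univ_of_forall fun ω => mem_iUnion.mpr (exists_nat_ge (q ω))
  have hlim := tendsto_setIntegral_of_monotone (s := fun n : ℕ => {ω | q ω ≤ n})
    (fun n => hq measurableSet_Iic) hmono hf.integrableOn
  rw [hunion, setIntegral_univ] at hlim
  exact tendsto_nhds_unique hlim (by simpa only [h] using tendsto_const_nhds)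

-- The braces of the `𝓜₃` estimating function, with `W = ω(X)`, `π = π(Z, X)`, `H = 𝓗(X)` and
-- `d = 1{D = 1}`.
noncomputable def estimatingResidual {Ω : Type*} (R : Ω → Bool) (Y W π H d : Ω → ℝ) (ω : Ω) : ℝ :=
  (if R ω then 1 else 0) * (Y ω - W ω) - (if R ω then 0 else 1) * (π ω / (1 - π ω)) * H ω * d ω

section Residual

variable {Ω : Type*} {m m0 : MeasurableSpace Ω} {P : Measure Ω}
  {R : Ω → Bool} {Y W π H d τ g : Ω → ℝ}

lemma estimatingResidual_of_true {ω : Ω} (hω : R ω = true) :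
    estimatingResidual R Y W π H d ω = Y ω - W ω := by
  simp [estimatingResidual, hω]

lemma estimatingResidual_of_false {ω : Ω} (hω : R ω = false) :
    estimatingResidual R Y W π H d ω = -(π ω / (1 - π ω) * H ω * d ω) := by
  simp [estimatingResidual, hω]

theorem integral_estimatingResidual_mul_eq_zero [IsFiniteMeasure P] (hm : m ≤ m0)
    (hR : Measurable R) (hY : Integrable Y P) (hd : Integrable d P)
    (hπm : StronglyMeasurable[m] π) (hH : StronglyMeasurable[m] H)
    (hW : StronglyMeasurable[m] W) (hτ : StronglyMeasurable[m] τ)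
    (hg : StronglyMeasurable[m] g)
    (hπ : π =ᵐ[P] P[fun ω => if R ω then 1 else 0|m]) (hπ1 : ∀ᵐ ω ∂P, π ω ≠ 1)
    (hout : P[|{ω | R ω = true}][Y|m] =ᵐ[P[|{ω | R ω = true}]] fun ω => H ω * τ ω + W ω)
    (hpse : τ =ᵐ[P[|{ω | R ω = false}]] P[|{ω | R ω = false}][d|m])
    (hint : Integrable (fun ω => estimatingResidual R Y W π H d ω * g ω) P) :
    ∫ ω, estimatingResidual R Y W π H d ω * g ω ∂P = 0 := by
  set s : Set Ω := {ω | R ω = true}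
  have hs : MeasurableSet s := hR (measurableSet_singleton true)
  have hπs : P[s.indicator 1|m] =ᵐ[P] π := by
    have : (fun ω => if R ω then (1 : ℝ) else 0) = s.indicator 1 := by
      ext ω; by_cases hω : R ω <;> simp [s, hω]
    exact (this ▸ hπ).symm
  have hfalse : {ω | R ω = false} = sᶜ := by ext ω; simp [s]
  rw [hfalse] at hpse
  set ρ : Ω → ℝ := fun ω => π ω / (1 - π ω)
  set q : Ω → ℝ := fun ω => ‖ρ ω‖ + ‖H ω‖ + ‖W ω‖ + ‖τ ω‖ + ‖g ω‖
  have hq : StronglyMeasurable[m] q :=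
    ((((hπm.div (stronglyMeasurable_const.sub hπm)).norm.add hH.norm).add hW.norm).add
      hτ.norm).add hg.norm
  refine integral_eq_zero_of_setIntegral_sublevel_eq_zero (hq.mono hm).measurable hint fun n => ?_
  have hA : MeasurableSet[m] {ω | q ω ≤ n} := hq.measurable measurableSet_Iic
  obtain ⟨hρn, hHn, hWn, hτn, hgn⟩ : (∀ ω ∈ {ω | q ω ≤ n}, ‖ρ ω‖ ≤ n) ∧
      (∀ ω ∈ {ω | q ω ≤ n}, ‖H ω‖ ≤ n) ∧ (∀ ω ∈ {ω | q ω ≤ n}, ‖W ω‖ ≤ n) ∧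
      (∀ ω ∈ {ω | q ω ≤ n}, ‖τ ω‖ ≤ n) ∧ (∀ ω ∈ {ω | q ω ≤ n}, ‖g ω‖ ≤ n) := by
    refine ⟨?_, ?_, ?_, ?_, ?_⟩ <;> intro ω (hω : q ω ≤ n) <;>
      linarith [norm_nonneg (ρ ω), norm_nonneg (H ω), norm_nonneg (W ω), norm_nonneg (τ ω),
        norm_nonneg (g ω)]
  rw [← integral_inter_add_sdiff hs hint.integrableOn,
    setIntegral_congr_fun ((hm _ hA).inter hs) fun ω hω => by
      rw [estimatingResidual_of_true hω.2],
    setIntegral_congr_fun ((hm _ hA).diff hs) fun ω hω => by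
      rw [estimatingResidual_of_false (by simpa [s] using hω.2), neg_mul],
    integral_neg, setIntegral_inter_sub_mul_eq hm hs hY hH hW hτ hg hπs hout hA hHn hWn hτn hgn,
    setIntegral_sdiff_odds_mul_eq hm hs hd hπm hH hτ hg hπs hπ1 hpse hA hρn hHn hτn hgn,
    add_neg_cancel]

end Residual

theorem stmt_12_general
    {Ω 𝒳 : Type*} [MeasurableSpace Ω] [MeasurableSpace 𝒳]
    (P : Measure Ω) [IsProbabilityMeasure P]
    (R Z D : Ω → Bool) (X : Ω → 𝒳) (Y : Ω → ℝ)
    (hR : Measurable R) (hZ : Measurable Z) (hD : Measurable D)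
    (hX : Measurable X) (hYint : Integrable Y P)
    -- τ(z,x) := P(D=1 | Z=z, X=x, R=1)
    (tau : Bool → 𝒳 → ℝ) (htau_meas : Measurable fun p : Bool × 𝒳 => tau p.1 p.2)
    -- π(z,x) := P(R=1 | Z=z, X=x), with 0 < π(Z,X) < 1 a.s.
    (pi : Bool → 𝒳 → ℝ) (hpi_meas : Measurable fun p : Bool × 𝒳 => pi p.1 p.2)
    (hpi_ver : (fun ω => pi (Z ω) (X ω)) =ᵐ[P]
      P[(fun ω => if R ω then (1:ℝ) else 0) |
        MeasurableSpace.comap (fun ω => (Z ω, X ω)) inferInstance])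
    (hpi_pos : ∀ᵐ ω ∂P, 0 < pi (Z ω) (X ω) ∧ pi (Z ω) (X ω) < 1)
    -- outcome decomposition: E(Y | Z, X, R=1) = 𝓗(X)·τ(Z,X) + ω(X) a.s.
    (Hfun wfun : 𝒳 → ℝ) (hHfun_meas : Measurable Hfun) (hwfun_meas : Measurable wfun)
    (hout : (P[|{ω | R ω = true}])[Y |
        MeasurableSpace.comap (fun ω => (Z ω, X ω)) inferInstance]
      =ᵐ[P[|{ω | R ω = true}]]
        fun ω => Hfun (X ω) * tau (Z ω) (X ω) + wfun (X ω))
    -- propensity score equality: P(D=1 | Z, X, R=0) = τ(Z,X) a.s.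
    (hpse : (fun ω => tau (Z ω) (X ω)) =ᵐ[P[|{ω | R ω = false}]]
      (P[|{ω | R ω = false}])[(fun ω => if D ω then (1:ℝ) else 0) |
        MeasurableSpace.comap (fun ω => (Z ω, X ω)) inferInstance])
    -- arbitrary measurable G : 𝒳×{0,1} → ℝ^k with integrable integrand
    (k : ℕ) (G : 𝒳 × Bool → EuclideanSpace ℝ (Fin k)) (hG : Measurable G)
    (hint : Integrable (fun ω =>
        ((if R ω then (1:ℝ) else 0) * (Y ω - wfun (X ω)) -
          (if R ω then (0:ℝ) else 1) * (pi (Z ω) (X ω) / (1 - pi (Z ω) (X ω))) *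
            Hfun (X ω) * (if D ω then (1:ℝ) else 0)) • G (X ω, Z ω)) P) :
    ∫ ω, ((if R ω then (1:ℝ) else 0) * (Y ω - wfun (X ω)) -
          (if R ω then (0:ℝ) else 1) * (pi (Z ω) (X ω) / (1 - pi (Z ω) (X ω))) *
            Hfun (X ω) * (if D ω then (1:ℝ) else 0)) • G (X ω, Z ω) ∂P = 0 := by
  have hDm : Measurable fun ω => if D ω then (1 : ℝ) else 0 :=
    (measurable_of_countable fun b : Bool => if b then (1 : ℝ) else 0).comp hD
  have hDint : Integrable (fun ω => if D ω then (1 : ℝ) else 0) P :=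
    Integrable.of_bound hDm.aestronglyMeasurable 1 (.of_forall fun ω => by split_ifs <;> simp)
  set m := MeasurableSpace.comap (fun ω => (Z ω, X ω)) inferInstance
  have hZX : Measurable[m] fun ω => (Z ω, X ω) := comap_measurable _
  have hXm : Measurable[m] X := measurable_snd.comp hZX
  ext i
  rw [eval_integral_piLp hint.eval_piLp]
  simp only [PiLp.smul_apply, smul_eq_mul]
  have hGi : Measurable[m] fun ω => G (X ω, Z ω) i :=
    ((EuclideanSpace.proj i).continuous.measurable.comp hG).comp
      (hXm.prodMk (measurable_fst.comp hZX))
  have hint_i := hint.eval_piLp i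
  simp only [PiLp.smul_apply, smul_eq_mul] at hint_i
  exact integral_estimatingResidual_mul_eq_zero (hZ.prodMk hX).comap_le hR hYint hDint
    (hpi_meas.comp hZX).stronglyMeasurable (hHfun_meas.comp hXm).stronglyMeasurable
    (hwfun_meas.comp hXm).stronglyMeasurable (htau_meas.comp hZX).stronglyMeasurable
    hGi.stronglyMeasurable hpi_ver (hpi_pos.mono fun ω h => h.2.ne) hout hpse hint_i

/-- Unbiasedness of the 𝓜₃ estimating function at the truth:
If `E(Y | Z, X, R=1) = 𝓗(X)·τ(Z,X) + ω(X)` a.s. and `P(D=1 | Z,X,R=0) = τ(Z,X)` a.s., then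
for every measurable `G : 𝒳×{0,1} → ℝ^k` with integrable integrand,
`E[ G(X,Z)·{ R·[Y − ω(X)] − ((1−R)·π(Z,X)/(1−π(Z,X)))·𝓗(X)·D } ] = 0`. -/
theorem stmt_12
    {Ω 𝒳 : Type*} [MeasurableSpace Ω] [MeasurableSpace 𝒳] [StandardBorelSpace 𝒳]
    (P : Measure Ω) [IsProbabilityMeasure P]
    (R Z D : Ω → Bool) (X : Ω → 𝒳) (Y : Ω → ℝ)
    (hR : Measurable R) (hZ : Measurable Z) (hD : Measurable D)
    (hX : Measurable X) (hY : Measurable Y) (hYint : Integrable Y P)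
    -- τ(z,x) := P(D=1 | Z=z, X=x, R=1)
    (tau : Bool → 𝒳 → ℝ) (htau_meas : Measurable fun p : Bool × 𝒳 => tau p.1 p.2)
    (htau_ver : (fun ω => tau (Z ω) (X ω)) =ᵐ[P[|{ω | R ω = true}]]
      (P[|{ω | R ω = true}])[(fun ω => if D ω then (1:ℝ) else 0) |
        MeasurableSpace.comap (fun ω => (Z ω, X ω)) inferInstance])
    -- π(z,x) := P(R=1 | Z=z, X=x), with 0 < π(Z,X) < 1 a.s.
    (pi : Bool → 𝒳 → ℝ) (hpi_meas : Measurable fun p : Bool × 𝒳 => pi p.1 p.2)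
    (hpi_ver : (fun ω => pi (Z ω) (X ω)) =ᵐ[P]
      P[(fun ω => if R ω then (1:ℝ) else 0) |
        MeasurableSpace.comap (fun ω => (Z ω, X ω)) inferInstance])
    (hpi_pos : ∀ᵐ ω ∂P, 0 < pi (Z ω) (X ω) ∧ pi (Z ω) (X ω) < 1)
    -- outcome decomposition: E(Y | Z, X, R=1) = 𝓗(X)·τ(Z,X) + ω(X) a.s.
    (Hfun wfun : 𝒳 → ℝ) (hHfun_meas : Measurable Hfun) (hwfun_meas : Measurable wfun)
    (hout : (P[|{ω | R ω = true}])[Y |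
        MeasurableSpace.comap (fun ω => (Z ω, X ω)) inferInstance]
      =ᵐ[P[|{ω | R ω = true}]]
        fun ω => Hfun (X ω) * tau (Z ω) (X ω) + wfun (X ω))
    -- propensity score equality: P(D=1 | Z, X, R=0) = τ(Z,X) a.s.
    (hpse : (fun ω => tau (Z ω) (X ω)) =ᵐ[P[|{ω | R ω = false}]]
      (P[|{ω | R ω = false}])[(fun ω => if D ω then (1:ℝ) else 0) |
        MeasurableSpace.comap (fun ω => (Z ω, X ω)) inferInstance])
    -- arbitrary measurable G : 𝒳×{0,1} → ℝ^k with integrable integrand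
    (k : ℕ) (G : 𝒳 × Bool → EuclideanSpace ℝ (Fin k)) (hG : Measurable G)
    (hint : Integrable (fun ω =>
        ((if R ω then (1:ℝ) else 0) * (Y ω - wfun (X ω)) -
          (if R ω then (0:ℝ) else 1) * (pi (Z ω) (X ω) / (1 - pi (Z ω) (X ω))) *
            Hfun (X ω) * (if D ω then (1:ℝ) else 0)) • G (X ω, Z ω)) P) :
    ∫ ω, ((if R ω then (1:ℝ) else 0) * (Y ω - wfun (X ω)) -
          (if R ω then (0:ℝ) else 1) * (pi (Z ω) (X ω) / (1 - pi (Z ω) (X ω))) *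
            Hfun (X ω) * (if D ω then (1:ℝ) else 0)) • G (X ω, Z ω) ∂P = 0 :=
  stmt_12_general P R Z D X Y hR hZ hD hX hYint tau htau_meas pi hpi_meas hpi_ver hpi_pos Hfun wfun
    hHfun_meas hwfun_meas hout hpse k G hG hint
end

section
/- (Double robustness of the estimating function for (γ,η), case 𝓜₂: correct propensity score, arbitrary data-source model.) Suppose E(Y | Z, X, R=1) = 𝓗(X)·τ(Z,X) + ω(X) a.s. for measurable functions 𝓗, ω, and P(D=1 | Z,X,R=0) = τ(Z,X) a.s. (propensity score equality). Let π̄ : {0,1}×𝒳 → (0,1) be an arbitrary measurable function. Then for every measurable function G : 𝒳×{0,1} → ℝ^k such that the integrand is integrable, E[ G(X,Z) · { R·[Y − 𝓗(X)·τ(Z,X) − ω(X)] − (1−R)·(π̄(Z,X)/(1−π̄(Z,X)))·𝓗(X)·[D − τ(Z,X)] } ] = 0. -/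
open MeasureTheory ProbabilityTheory

/-!
Condition on the data source. On `{R = 1}` the integrand is `(Y - E[Y | Z, X, R = 1]) • g(Z, X)`
by the outcome model, on `{R = 0}` it is `(D - P(D = 1 | Z, X, R = 0)) • g'(Z, X)` by propensity
score equality, with `g, g'` functions of `(Z, X)` alone; the weight `π̄ / (1 - π̄)` is absorbed
into `g'`, which is why `π̄` is arbitrary. Both pieces are orthogonal to every `(Z, X)`-measurable
function by the pull-out property of conditional expectation.
-/

section

variable {Ω E : Type*} [NormedAddCommGroup E]

theorem MeasureTheory.IntegrableOn.cond {m₀ : MeasurableSpace Ω} {μ : Measure Ω} {s : Set Ω}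
    {f : Ω → E} (hf : IntegrableOn f s μ) : Integrable f μ[|s] := by
  by_cases hs : μ s = 0
  · simp [cond_eq_zero_of_meas_eq_zero hs]
  · exact hf.smul_measure (ENNReal.inv_ne_top.mpr hs)

variable [NormedSpace ℝ E]

theorem setIntegral_eq_measureReal_smul_integral_cond {m₀ : MeasurableSpace Ω} {μ : Measure Ω}
    [IsFiniteMeasure μ] (s : Set Ω) (f : Ω → E) :
    ∫ ω in s, f ω ∂μ = μ.real s • ∫ ω, f ω ∂μ[|s] := by
  by_cases hs : μ s = 0
  · simp [Measure.restrict_eq_zero.mpr hs, measureReal_def, hs]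
  · have hs' : (μ s).toReal ≠ 0 := ENNReal.toReal_ne_zero.mpr ⟨hs, measure_ne_top μ s⟩
    rw [ProbabilityTheory.cond, integral_smul_measure, smul_smul, ENNReal.toReal_inv,
      measureReal_def, mul_inv_cancel₀ hs', one_smul]

variable [CompleteSpace E]

theorem integral_sub_smul_eq_zero_of_condExp_ae_eq {m m₀ : MeasurableSpace Ω} (hm : m ≤ m₀)
    {μ : Measure Ω} [IsFiniteMeasure μ] {Y φ : Ω → ℝ} {g : Ω → E}
    (hg : AEStronglyMeasurable[m] g μ) (hY : Integrable Y μ) (hce : μ[Y|m] =ᵐ[μ] φ)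
    (hI : Integrable (fun ω => (Y ω - φ ω) • g ω) μ) :
    ∫ ω, (Y ω - φ ω) • g ω ∂μ = 0 := by
  have hφ : Integrable φ μ := integrable_condExp.congr hce
  have hφm : AEStronglyMeasurable[m] φ μ :=
    stronglyMeasurable_condExp.aestronglyMeasurable.congr hce
  have hres : μ[Y - φ|m] =ᵐ[μ] 0 := by
    filter_upwards [condExp_sub hY hφ m, hce, condExp_of_aestronglyMeasurable' hm hφm hφ]
      with ω h₁ h₂ h₃
    simp [h₁, h₂, h₃]
  calc ∫ ω, (Y ω - φ ω) • g ω ∂μ = ∫ ω, (μ[(Y - φ) • g|m]) ω ∂μ := (integral_condExp hm).symm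
    _ = ∫ ω, (μ[Y - φ|m] • g) ω ∂μ :=
      integral_congr_ae (condExp_smul_of_aestronglyMeasurable_right (hY.sub hφ) hI hg)
    _ = 0 := integral_eq_zero_of_ae <| by
      filter_upwards [hres] with ω hω
      simp [hω]

theorem setIntegral_sub_smul_eq_zero_of_condExp_cond_ae_eq {m m₀ : MeasurableSpace Ω}
    (hm : m ≤ m₀) {μ : Measure Ω} [IsFiniteMeasure μ] {s : Set Ω} {Y φ : Ω → ℝ} {g : Ω → E}
    (hg : AEStronglyMeasurable[m] g μ[|s]) (hY : IntegrableOn Y s μ)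
    (hce : μ[|s][Y|m] =ᵐ[μ[|s]] φ) (hI : IntegrableOn (fun ω => (Y ω - φ ω) • g ω) s μ) :
    ∫ ω in s, (Y ω - φ ω) • g ω ∂μ = 0 := by
  rw [setIntegral_eq_measureReal_smul_integral_cond,
    integral_sub_smul_eq_zero_of_condExp_ae_eq hm hg hY.cond hce hI.cond, smul_zero]

end

theorem stmt_13_general
    {Ω 𝒳 : Type*} [MeasurableSpace Ω] [MeasurableSpace 𝒳]
    (P : Measure Ω) [IsProbabilityMeasure P]
    (R Z D : Ω → Bool) (X : Ω → 𝒳) (Y : Ω → ℝ)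
    (hR : Measurable R) (hZ : Measurable Z) (hD : Measurable D)
    (hX : Measurable X) (hYint : Integrable Y P)
    -- τ(z,x) := P(D=1 | Z=z, X=x, R=1)
    (tau : Bool → 𝒳 → ℝ)
    -- outcome decomposition: E(Y | Z, X, R=1) = 𝓗(X)·τ(Z,X) + ω(X) a.s.
    (Hfun wfun : 𝒳 → ℝ) (hHfun_meas : Measurable Hfun)
    (hout : (P[|{ω | R ω = true}])[Y |
        MeasurableSpace.comap (fun ω => (Z ω, X ω)) inferInstance]
      =ᵐ[P[|{ω | R ω = true}]]
        fun ω => Hfun (X ω) * tau (Z ω) (X ω) + wfun (X ω))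
    -- propensity score equality: P(D=1 | Z, X, R=0) = τ(Z,X) a.s.
    (hpse : (fun ω => tau (Z ω) (X ω)) =ᵐ[P[|{ω | R ω = false}]]
      (P[|{ω | R ω = false}])[(fun ω => if D ω then (1:ℝ) else 0) |
        MeasurableSpace.comap (fun ω => (Z ω, X ω)) inferInstance])
    -- arbitrary measurable working model π̄ : {0,1}×𝒳 → (0,1)
    (pibar : Bool → 𝒳 → ℝ) (hpibar_meas : Measurable fun p : Bool × 𝒳 => pibar p.1 p.2)
    -- arbitrary measurable G : 𝒳×{0,1} → ℝ^k with integrable integrand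
    (k : ℕ) (G : 𝒳 × Bool → EuclideanSpace ℝ (Fin k)) (hG : Measurable G)
    (hint : Integrable (fun ω =>
        ((if R ω then (1:ℝ) else 0) *
            (Y ω - Hfun (X ω) * tau (Z ω) (X ω) - wfun (X ω)) -
          (if R ω then (0:ℝ) else 1) * (pibar (Z ω) (X ω) / (1 - pibar (Z ω) (X ω))) *
            Hfun (X ω) * ((if D ω then (1:ℝ) else 0) - tau (Z ω) (X ω))) • G (X ω, Z ω)) P) :
    ∫ ω, ((if R ω then (1:ℝ) else 0) *
            (Y ω - Hfun (X ω) * tau (Z ω) (X ω) - wfun (X ω)) -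
          (if R ω then (0:ℝ) else 1) * (pibar (Z ω) (X ω) / (1 - pibar (Z ω) (X ω))) *
            Hfun (X ω) * ((if D ω then (1:ℝ) else 0) - tau (Z ω) (X ω))) • G (X ω, Z ω) ∂P
      = 0 := by
  have hm := (hZ.prodMk hX).comap_le
  have hZX {ψ : Bool × 𝒳 → EuclideanSpace ℝ (Fin k)} (hψ : Measurable ψ) (μ : Measure Ω) :
      AEStronglyMeasurable[MeasurableSpace.comap (fun ω => (Z ω, X ω)) inferInstance]
        (fun ω => ψ (Z ω, X ω)) μ :=
    (hψ.comp (comap_measurable _)).stronglyMeasurable.aestronglyMeasurable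
  have hs : MeasurableSet {ω | R ω = true} := hR (measurableSet_singleton true)
  have hs₀ : MeasurableSet {ω | R ω = false} := hR (measurableSet_singleton false)
  have hsc : {ω | R ω = true}ᶜ = {ω | R ω = false} := by ext; simp
  have hD₁ : Integrable (fun ω => if D ω then (1:ℝ) else 0) P :=
    .of_bound ((measurable_of_countable fun b : Bool => if b then (1:ℝ) else 0).comp
      hD).aestronglyMeasurable 1
      (.of_forall fun ω => by split <;> simp)
  set F := fun ω => ((if R ω then (1:ℝ) else 0) *
            (Y ω - Hfun (X ω) * tau (Z ω) (X ω) - wfun (X ω)) -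
          (if R ω then (0:ℝ) else 1) * (pibar (Z ω) (X ω) / (1 - pibar (Z ω) (X ω))) *
            Hfun (X ω) * ((if D ω then (1:ℝ) else 0) - tau (Z ω) (X ω))) • G (X ω, Z ω) with hF
  have hF₁ : Set.EqOn F (fun ω =>
      (Y ω - (Hfun (X ω) * tau (Z ω) (X ω) + wfun (X ω))) • G (X ω, Z ω)) {ω | R ω = true} := by
    intro ω (hω : R ω = true)
    simp only [hF, hω, ↓reduceIte]
    congr 1
    ring
  have hF₀ : Set.EqOn F (fun ω => ((if D ω then (1:ℝ) else 0) - tau (Z ω) (X ω)) •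
      (-(pibar (Z ω) (X ω) / (1 - pibar (Z ω) (X ω)) * Hfun (X ω))) • G (X ω, Z ω))
      {ω | R ω = false} := by
    intro ω (hω : R ω = false)
    simp only [hF, hω, smul_smul, Bool.false_eq_true, ↓reduceIte]
    congr 1
    ring
  rw [← integral_add_compl hs hint, hsc, setIntegral_congr_fun hs hF₁,
    setIntegral_congr_fun hs₀ hF₀]
  convert add_zero (0 : EuclideanSpace ℝ (Fin k)) using 2
  · exact setIntegral_sub_smul_eq_zero_of_condExp_cond_ae_eq hm
      (hZX (hG.comp measurable_swap) _) hYint.integrableOn hout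
      (hint.integrableOn.congr_fun hF₁ hs)
  · exact setIntegral_sub_smul_eq_zero_of_condExp_cond_ae_eq hm
      (hZX (((hpibar_meas.div (measurable_const.sub hpibar_meas)).mul
        (hHfun_meas.comp measurable_snd)).neg.smul (hG.comp measurable_swap)) _)
      hD₁.integrableOn hpse.symm (hint.integrableOn.congr_fun hF₀ hs₀)

/-- Double robustness of the (γ,η) estimating function, case 𝓜₂:
correct treatment propensity score `τ` and outcome decomposition, arbitrary data-source
working model `π̄ : {0,1}×𝒳 → (0,1)`. Then for every measurable `G : 𝒳×{0,1} → ℝ^k` with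
integrable integrand,
`E[ G(X,Z)·{ R·[Y − 𝓗(X)τ(Z,X) − ω(X)] − (1−R)·(π̄(Z,X)/(1−π̄(Z,X)))·𝓗(X)·[D − τ(Z,X)] } ] = 0`. -/
theorem stmt_13
    {Ω 𝒳 : Type*} [MeasurableSpace Ω] [MeasurableSpace 𝒳] [StandardBorelSpace 𝒳]
    (P : Measure Ω) [IsProbabilityMeasure P]
    (R Z D : Ω → Bool) (X : Ω → 𝒳) (Y : Ω → ℝ)
    (hR : Measurable R) (hZ : Measurable Z) (hD : Measurable D)
    (hX : Measurable X) (hY : Measurable Y) (hYint : Integrable Y P)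
    -- τ(z,x) := P(D=1 | Z=z, X=x, R=1)
    (tau : Bool → 𝒳 → ℝ) (htau_meas : Measurable fun p : Bool × 𝒳 => tau p.1 p.2)
    (htau_ver : (fun ω => tau (Z ω) (X ω)) =ᵐ[P[|{ω | R ω = true}]]
      (P[|{ω | R ω = true}])[(fun ω => if D ω then (1:ℝ) else 0) |
        MeasurableSpace.comap (fun ω => (Z ω, X ω)) inferInstance])
    -- outcome decomposition: E(Y | Z, X, R=1) = 𝓗(X)·τ(Z,X) + ω(X) a.s.
    (Hfun wfun : 𝒳 → ℝ) (hHfun_meas : Measurable Hfun) (hwfun_meas : Measurable wfun)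
    (hout : (P[|{ω | R ω = true}])[Y |
        MeasurableSpace.comap (fun ω => (Z ω, X ω)) inferInstance]
      =ᵐ[P[|{ω | R ω = true}]]
        fun ω => Hfun (X ω) * tau (Z ω) (X ω) + wfun (X ω))
    -- propensity score equality: P(D=1 | Z, X, R=0) = τ(Z,X) a.s.
    (hpse : (fun ω => tau (Z ω) (X ω)) =ᵐ[P[|{ω | R ω = false}]]
      (P[|{ω | R ω = false}])[(fun ω => if D ω then (1:ℝ) else 0) |
        MeasurableSpace.comap (fun ω => (Z ω, X ω)) inferInstance])
    -- arbitrary measurable working model π̄ : {0,1}×𝒳 → (0,1)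
    (pibar : Bool → 𝒳 → ℝ) (hpibar_meas : Measurable fun p : Bool × 𝒳 => pibar p.1 p.2)
    (hpibar_range : ∀ z x, 0 < pibar z x ∧ pibar z x < 1)
    -- arbitrary measurable G : 𝒳×{0,1} → ℝ^k with integrable integrand
    (k : ℕ) (G : 𝒳 × Bool → EuclideanSpace ℝ (Fin k)) (hG : Measurable G)
    (hint : Integrable (fun ω =>
        ((if R ω then (1:ℝ) else 0) *
            (Y ω - Hfun (X ω) * tau (Z ω) (X ω) - wfun (X ω)) -
          (if R ω then (0:ℝ) else 1) * (pibar (Z ω) (X ω) / (1 - pibar (Z ω) (X ω))) *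
            Hfun (X ω) * ((if D ω then (1:ℝ) else 0) - tau (Z ω) (X ω))) • G (X ω, Z ω)) P) :
    ∫ ω, ((if R ω then (1:ℝ) else 0) *
            (Y ω - Hfun (X ω) * tau (Z ω) (X ω) - wfun (X ω)) -
          (if R ω then (0:ℝ) else 1) * (pibar (Z ω) (X ω) / (1 - pibar (Z ω) (X ω))) *
            Hfun (X ω) * ((if D ω then (1:ℝ) else 0) - tau (Z ω) (X ω))) • G (X ω, Z ω) ∂P
      = 0 :=
  stmt_13_general P R Z D X Y hR hZ hD hX hYint tau Hfun wfun hHfun_meas hout hpse pibar hpibar_meas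
    k G hG hint
end
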